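/- arXiv:2501.13515 — 3 statements merged into one kernel-verified Lean document; each statement's English description precedes it below -/
import Mathlib

section
/- Fix an integer R ≥ 1, a time step Δt > 0, and set t_r = rΔt for r = 0,…,R. The set V of coefficient vectors a = (a_{r,0}, a_{r,1})_{r=0,…,R} ∈ ℝ^{2(R+1)} such that ∑_{r=0}^{R} ( a_{r,0} φ(t_r) + a_{r,1} φ'(t_r) ) = 0 for every real polynomial φ of degree ≤ R+1 is a linear subspace of ℝ^{2(R+1)} of dimension exactly R. -/
open Polynomial Finset

private lemma zd_count_sum_le {α : Type*} [DecidableEq α] (s : Multiset α) (T : Finset α) :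
    ∑ x ∈ T, s.count x ≤ Multiset.card s := by
  rw [← Multiset.toFinset_sum_count_eq s]
  rw [← Finset.sum_inter_add_sum_sdiff T s.toFinset (s.count ·)]
  have h0 : ∑ x ∈ T \ s.toFinset, s.count x = 0 := by
    apply Finset.sum_eq_zero
    intro x hx
    rw [Multiset.count_eq_zero]
    simp at hx
    exact hx.2
  rw [h0, add_zero]
  exact Finset.sum_le_sum_of_subset (Finset.inter_subset_right)

/-- The map sending coefficient vectors to the values of the structural functional on
monomials `X^k`, `k = 0, …, R+1`. -/
noncomputable def zdT (R : ℕ) (Δt : ℝ) : (Fin (R+1) → ℝ × ℝ) →ₗ[ℝ] (Fin (R+2) → ℝ) where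
  toFun a := fun k => ∑ r : Fin (R+1),
    ((a r).1 * ((r:ℕ) * Δt)^(k:ℕ) + (a r).2 * (((k:ℕ):ℝ) * ((r:ℕ)*Δt)^((k:ℕ)-1)))
  map_add' a b := by
    funext k
    simp only [Pi.add_apply, Prod.fst_add, Prod.snd_add, ← Finset.sum_add_distrib]
    exact Finset.sum_congr rfl fun r _ => by ring
  map_smul' c a := by
    funext k
    simp only [Pi.smul_apply, Prod.smul_fst, Prod.smul_snd, smul_eq_mul, RingHom.id_apply,
      Finset.mul_sum]
    exact Finset.sum_congr rfl fun r _ => by ring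

/-- The map sending polynomial coefficient vectors to values/derivatives at the grid points. -/
noncomputable def zdS (R : ℕ) (Δt : ℝ) : (Fin (R+2) → ℝ) →ₗ[ℝ] (Fin (R+1) → ℝ × ℝ) where
  toFun c := fun r => (∑ k : Fin (R+2), c k * ((r:ℕ)*Δt)^(k:ℕ),
                       ∑ k : Fin (R+2), c k * (((k:ℕ):ℝ) * ((r:ℕ)*Δt)^((k:ℕ)-1)))
  map_add' a b := by
    funext r
    refine Prod.ext ?_ ?_ <;>
      simp only [Pi.add_apply, Prod.fst_add, Prod.snd_add, ← Finset.sum_add_distrib] <;>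
      exact Finset.sum_congr rfl fun k _ => by ring
  map_smul' c a := by
    funext r
    refine Prod.ext ?_ ?_ <;>
      simp only [Pi.smul_apply, Prod.smul_fst, Prod.smul_snd, smul_eq_mul, RingHom.id_apply,
        Finset.mul_sum] <;>
      exact Finset.sum_congr rfl fun k _ => by ring

private lemma zd_deriv_eval_eq {φ : Polynomial ℝ} {n : ℕ} (h : φ.natDegree < n) (t : ℝ) :
    (derivative φ).eval t = ∑ i ∈ Finset.range n, φ.coeff i * (i * t^(i-1)) := by
  conv_lhs => rw [Polynomial.as_sum_range' φ n h]
  rw [map_sum, Polynomial.eval_finset_sum]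
  refine Finset.sum_congr rfl fun i _ => ?_
  simp only [Polynomial.derivative_monomial, Polynomial.eval_monomial]
  ring

/-- For `R ≥ 1` and `Δt > 0`, with grid points `t_r = r·Δt`, the set of
coefficient vectors `a = (a_{r,0}, a_{r,1})_{r=0,…,R}` such that
`∑_r (a_{r,0} φ(t_r) + a_{r,1} φ'(t_r)) = 0` for every real polynomial `φ` of degree
`≤ R+1` is a linear subspace of `ℝ^{2(R+1)}` of dimension exactly `R`. -/
theorem zd_structural_space_dim (R : ℕ) (hR : 1 ≤ R) (Δt : ℝ) (hΔt : 0 < Δt) :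
    ∃ V : Submodule ℝ (Fin (R + 1) → ℝ × ℝ),
      (∀ a : Fin (R + 1) → ℝ × ℝ,
        a ∈ V ↔ ∀ φ : Polynomial ℝ, φ.natDegree ≤ R + 1 →
          ∑ r : Fin (R + 1),
            ((a r).1 * φ.eval ((r : ℕ) * Δt)
              + (a r).2 * φ.derivative.eval ((r : ℕ) * Δt)) = 0) ∧
      Module.finrank ℝ V = R := by
  refine ⟨LinearMap.ker (zdT R Δt), ?_, ?_⟩
  · intro a
    constructor
    · intro ha φ hφ
      have hd : φ.natDegree < R + 2 := by omega
      have hT : ∀ k : Fin (R+2), zdT R Δt a k = 0 :=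
        fun k => congrFun (LinearMap.mem_ker.mp ha) k
      calc ∑ r : Fin (R+1), ((a r).1 * φ.eval ((r:ℕ) * Δt)
              + (a r).2 * (derivative φ).eval ((r:ℕ) * Δt))
          = ∑ r : Fin (R+1), ∑ i ∈ Finset.range (R+2),
              φ.coeff i * ((a r).1 * (((r:ℕ):ℝ)*Δt)^i
                + (a r).2 * ((i:ℝ) * (((r:ℕ):ℝ)*Δt)^(i-1))) := by
            refine Finset.sum_congr rfl fun r _ => ?_
            rw [Polynomial.eval_eq_sum_range' hd, zd_deriv_eval_eq hd,
              Finset.mul_sum, Finset.mul_sum, ← Finset.sum_add_distrib]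
            exact Finset.sum_congr rfl fun i _ => by ring
        _ = ∑ i ∈ Finset.range (R+2), φ.coeff i * ∑ r : Fin (R+1),
              ((a r).1 * (((r:ℕ):ℝ)*Δt)^i + (a r).2 * ((i:ℝ) * (((r:ℕ):ℝ)*Δt)^(i-1))) := by
            rw [Finset.sum_comm]
            exact Finset.sum_congr rfl fun i _ => by rw [Finset.mul_sum]
        _ = ∑ k : Fin (R+2), φ.coeff (k:ℕ) * zdT R Δt a k := by
            rw [← Fin.sum_univ_eq_sum_range (fun i => φ.coeff i * ∑ r : Fin (R+1),
              ((a r).1 * (((r:ℕ):ℝ)*Δt)^i + (a r).2 * ((i:ℝ) * (((r:ℕ):ℝ)*Δt)^(i-1))))]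
            rfl
        _ = 0 := by simp [hT]
    · intro h
      rw [LinearMap.mem_ker]
      funext k
      have hk : ((X : Polynomial ℝ)^(k:ℕ)).natDegree ≤ R + 1 := by
        rw [Polynomial.natDegree_X_pow]; omega
      have := h ((X : Polynomial ℝ)^(k:ℕ)) hk
      simp only [Polynomial.derivative_X_pow, Polynomial.eval_pow, Polynomial.eval_X,
        Polynomial.eval_mul, Polynomial.eval_natCast, Polynomial.eval_monomial] at this
      show (∑ r : Fin (R+1), ((a r).1 * ((r:ℕ) * Δt)^(k:ℕ)
        + (a r).2 * (((k:ℕ):ℝ) * ((r:ℕ)*Δt)^((k:ℕ)-1)))) = 0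
      convert this using 2 with r
      simp
  · -- dimension count
    have htinj : Function.Injective (fun r : Fin (R+1) => (((r:ℕ):ℝ) * Δt)) := by
      intro r s hrs
      have : ((r:ℕ):ℝ) = ((s:ℕ):ℝ) := mul_right_cancel₀ hΔt.ne' hrs
      exact Fin.ext (Nat.cast_injective this)
    -- injectivity of zdS
    have hSinj : Function.Injective (zdS R Δt) := by
      rw [← LinearMap.ker_eq_bot, LinearMap.ker_eq_bot']
      intro c hc
      set φ : Polynomial ℝ := ∑ k : Fin (R+2), C (c k) * X^(k:ℕ) with hφdef
      have hcoeff : ∀ k : Fin (R+2), φ.coeff (k:ℕ) = c k := by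
        intro k
        rw [hφdef, Polynomial.finset_sum_coeff]
        simp only [Polynomial.coeff_C_mul, Polynomial.coeff_X_pow]
        rw [Finset.sum_eq_single k]
        · simp
        · intro b _ hb
          have : (b:ℕ) ≠ (k:ℕ) := fun h => hb (Fin.ext h)
          rw [if_neg (Ne.symm this), mul_zero]
        · simp
      have hdeg : φ.natDegree ≤ R + 1 := by
        refine Polynomial.natDegree_sum_le_of_forall_le _ _ fun k _ => ?_
        refine le_trans (Polynomial.natDegree_C_mul_le _ _) ?_
        rw [Polynomial.natDegree_X_pow]
        omega
      have hzero : ∀ r : Fin (R+1), zdS R Δt c r = 0 := fun r => congrFun hc r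
      have heval : ∀ r : Fin (R+1), φ.eval (((r:ℕ):ℝ)*Δt) = 0 ∧
          (derivative φ).eval (((r:ℕ):ℝ)*Δt) = 0 := by
        intro r
        have h1 : (zdS R Δt c r).1 = 0 := by rw [hzero r]; rfl
        have h2 : (zdS R Δt c r).2 = 0 := by rw [hzero r]; rfl
        constructor
        · rw [hφdef, Polynomial.eval_finset_sum]
          simp only [Polynomial.eval_mul, Polynomial.eval_C, Polynomial.eval_pow,
            Polynomial.eval_X]
          exact h1
        · rw [hφdef, map_sum, Polynomial.eval_finset_sum]
          simp only [Polynomial.derivative_C_mul, Polynomial.derivative_X_pow,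
            Polynomial.eval_mul, Polynomial.eval_C, Polynomial.eval_natCast,
            Polynomial.eval_pow, Polynomial.eval_X]
          rw [← h2]
          exact Finset.sum_congr rfl fun k _ => by ring
      have hφ0 : φ = 0 := by
        by_contra hne
        have hmul : ∀ r : Fin (R+1), 2 ≤ φ.roots.count (((r:ℕ):ℝ)*Δt) := by
          intro r
          rw [Polynomial.count_roots]
          exact (Polynomial.one_lt_rootMultiplicity_iff_isRoot hne).mpr
            ⟨(heval r).1, (heval r).2⟩
        have hbig : 2 * (R+1) ≤ Multiset.card φ.roots := by
          calc 2 * (R+1) = ∑ _r : Fin (R+1), 2 := by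
                simp [Finset.sum_const, mul_comm]
            _ ≤ ∑ r : Fin (R+1), φ.roots.count (((r:ℕ):ℝ)*Δt) :=
                Finset.sum_le_sum fun r _ => hmul r
            _ = ∑ x ∈ Finset.univ.image (fun r : Fin (R+1) => (((r:ℕ):ℝ)*Δt)),
                  φ.roots.count x := by
                rw [Finset.sum_image (fun x _ y _ h => htinj h)]
            _ ≤ Multiset.card φ.roots := zd_count_sum_le _ _
        have hsmall : Multiset.card φ.roots ≤ R + 1 :=
          le_trans (Polynomial.card_roots' φ) hdeg
        omega
      funext k
      rw [← hcoeff k, hφ0]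
      simp
    -- the composition zdT ∘ zdS is injective
    have hcomp : Function.Injective ((zdT R Δt).comp (zdS R Δt)) := by
      rw [← LinearMap.ker_eq_bot, LinearMap.ker_eq_bot']
      intro c hc
      have hc' : zdT R Δt (zdS R Δt c) = 0 := hc
      have hkey : ∑ r : Fin (R+1), ((zdS R Δt c r).1^2 + (zdS R Δt c r).2^2)
          = ∑ k : Fin (R+2), c k * (zdT R Δt (zdS R Δt c)) k := by
        have hswap : ∑ k : Fin (R+2), c k * (zdT R Δt (zdS R Δt c)) k
            = ∑ r : Fin (R+1), ∑ k : Fin (R+2),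
                c k * ((zdS R Δt c r).1 * (((r:ℕ):ℝ)*Δt)^(k:ℕ)
                  + (zdS R Δt c r).2 * (((k:ℕ):ℝ)*(((r:ℕ):ℝ)*Δt)^((k:ℕ)-1))) := by
          rw [Finset.sum_comm]
          refine Finset.sum_congr rfl fun k _ => ?_
          rw [← Finset.mul_sum]
          rfl
        rw [hswap]
        refine Finset.sum_congr rfl fun r _ => ?_
        have hx : (zdS R Δt c r).1 = ∑ k : Fin (R+2), c k * (((r:ℕ):ℝ)*Δt)^(k:ℕ) := rfl
        have hy : (zdS R Δt c r).2
            = ∑ k : Fin (R+2), c k * (((k:ℕ):ℝ)*(((r:ℕ):ℝ)*Δt)^((k:ℕ)-1)) := rfl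
        have expand : ∀ (x y : ℝ) (A B : Fin (R+2) → ℝ),
            ∑ k : Fin (R+2), c k * (x * A k + y * B k)
            = x * ∑ k : Fin (R+2), c k * A k + y * ∑ k : Fin (R+2), c k * B k := by
          intro x y A B
          rw [Finset.mul_sum, Finset.mul_sum, ← Finset.sum_add_distrib]
          exact Finset.sum_congr rfl fun k _ => by ring
        rw [expand, ← hx, ← hy]
        ring
      rw [hc'] at hkey
      simp only [Pi.zero_apply, mul_zero, Finset.sum_const_zero] at hkey
      have hterm : ∀ r ∈ (Finset.univ : Finset (Fin (R+1))),
          (zdS R Δt c r).1^2 + (zdS R Δt c r).2^2 = 0 := by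
        rw [Finset.sum_eq_zero_iff_of_nonneg
          (fun r _ => add_nonneg (sq_nonneg _) (sq_nonneg _))] at hkey
        exact hkey
      have hS0 : zdS R Δt c = 0 := by
        funext r
        have h := hterm r (Finset.mem_univ r)
        have h1 : (zdS R Δt c r).1 = 0 := by nlinarith [sq_nonneg (zdS R Δt c r).1, sq_nonneg (zdS R Δt c r).2]
        have h2 : (zdS R Δt c r).2 = 0 := by nlinarith [sq_nonneg (zdS R Δt c r).1, sq_nonneg (zdS R Δt c r).2]
        exact Prod.ext h1 h2
      exact hSinj (by rw [hS0]; exact (map_zero _).symm)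
    -- injective endomorphism of a finite-dimensional space is surjective
    have hsurj : Function.Surjective ((zdT R Δt).comp (zdS R Δt)) :=
      (LinearMap.injective_iff_surjective).mp hcomp
    have hTsurj : Function.Surjective (zdT R Δt) :=
      Function.Surjective.of_comp (g := (zdS R Δt)) hsurj
    have hrange : LinearMap.range (zdT R Δt) = ⊤ := LinearMap.range_eq_top.mpr hTsurj
    have hrn := LinearMap.finrank_range_add_finrank_ker (zdT R Δt)
    rw [hrange, finrank_top] at hrn
    have h1 : Module.finrank ℝ (Fin (R+2) → ℝ) = R + 2 := by
      simp [Module.finrank_pi]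
    have h2 : Module.finrank ℝ (Fin (R+1) → ℝ × ℝ) = 2 * (R+1) := by
      rw [Module.finrank_pi_fintype]
      simp [Module.finrank_prod, mul_comm]
    rw [h1, h2] at hrn
    omega
end

section
/- Fix an integer R ≥ 1, a time step Δt > 0, and set t_r = rΔt for r = 0,…,R. The set W of coefficient vectors a = (a_{r,0}, a_{r,1}, a_{r,2})_{r=0,…,R} ∈ ℝ^{3(R+1)} such that ∑_{r=0}^{R} ( a_{r,0} φ(t_r) + a_{r,1} φ'(t_r) + a_{r,2} φ''(t_r) ) = 0 for every real polynomial φ of degree ≤ 2R+2 is a linear subspace of ℝ^{3(R+1)} of dimension exactly R. -/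
/-! `W` is the orthogonal complement, for the dot product on `ℝ^{3(R+1)}`, of the image of the
polynomials of degree `≤ 2R+2` under the jet map `φ ↦ (φ(t_r), φ'(t_r), φ''(t_r))_r`. The jet map
is injective on them, since a nonzero polynomial with a root of multiplicity `≥ 3` at each of the
`R+1` distinct points `t_r` has degree `≥ 3(R+1)`. So the image has dimension `2R+3`, and `W` has
dimension `3(R+1) - (2R+3) = R`. -/

open Polynomial

namespace Polynomial

variable {K : Type*} [Field K] {ι : Type*}

theorem eq_zero_of_iterate_derivative_eval_eq_zero [CharZero K] [Fintype ι] {t : ι → K}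
    (ht : Function.Injective t) {n : ℕ} {p : K[X]} (hdeg : p.natDegree < (n + 1) * Fintype.card ι)
    (h : ∀ i, ∀ m ≤ n, (derivative^[m] p).eval (t i) = 0) : p = 0 := by
  by_contra hp
  have hdvd : (∏ i, (X - C (t i)) ^ (n + 1)) ∣ p :=
    Finset.prod_dvd_of_coprime (fun i _ j _ hij => (pairwise_coprime_X_sub_C ht hij).pow)
      fun i _ => (le_rootMultiplicity_iff hp).mp
        (lt_rootMultiplicity_of_isRoot_iterate_derivative hp (h i))
  have hprod : (∏ i, (X - C (t i)) ^ (n + 1)).natDegree = (n + 1) * Fintype.card ι := by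
    rw [natDegree_prod_of_monic _ _ fun i _ => (monic_X_sub_C _).pow _]
    simp [mul_comm]
  exact hdeg.not_ge (hprod ▸ natDegree_le_of_dvd hdvd hp)

theorem finrank_degreeLE (n : ℕ) : Module.finrank K (degreeLE K n) = n + 1 := by
  rw [← degreeLT_succ_eq_degreeLE, (degreeLTEquiv K (n + 1)).finrank_eq, Module.finrank_fin_fun]

noncomputable def secondJet {R : Type*} [CommSemiring R] (t : ι → R) : R[X] →ₗ[R] ι → R × R × R :=
  LinearMap.pi fun i => (leval (t i)).prod
    ((leval (t i) ∘ₗ derivative).prod (leval (t i) ∘ₗ derivative ∘ₗ derivative))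

@[simp]
theorem secondJet_apply {R : Type*} [CommSemiring R] (t : ι → R) (p : R[X]) (i : ι) :
    secondJet t p i = (p.eval (t i), p.derivative.eval (t i), p.derivative.derivative.eval (t i)) :=
  rfl

theorem injective_secondJet_comp_subtype [CharZero K] [Fintype ι] {t : ι → K}
    (ht : Function.Injective t) {n : ℕ} (hn : n < 3 * Fintype.card ι) :
    Function.Injective (secondJet t ∘ₗ (degreeLE K n).subtype) := by
  rw [← LinearMap.ker_eq_bot, Submodule.eq_bot_iff]
  rintro ⟨p, hp⟩ hjet
  have hjet i := congrFun hjet i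
  simp only [LinearMap.comp_apply, Submodule.coe_subtype, secondJet_apply,
    Pi.zero_apply, Prod.mk_eq_zero] at hjet
  refine Subtype.ext (eq_zero_of_iterate_derivative_eval_eq_zero ht (n := 2) ?_ fun i m hm => ?_)
  · rw [mem_degreeLE, ← natDegree_le_iff_degree_le] at hp
    change p.natDegree < 3 * Fintype.card ι
    omega
  · interval_cases m <;> simp [hjet i]

end Polynomial

section DotProductForm

variable {R : Type*} [CommRing R] (ι : Type*) [Fintype ι]

def dotProductForm : LinearMap.BilinForm R (ι → R × R × R) :=
  LinearMap.mk₂ R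
    (fun x a => ∑ i, ((a i).1 * (x i).1 + (a i).2.1 * (x i).2.1 + (a i).2.2 * (x i).2.2))
    (fun _ _ _ => by
      simp only [Pi.add_apply, Prod.fst_add, Prod.snd_add, ← Finset.sum_add_distrib]
      exact Finset.sum_congr rfl fun _ _ => by ring)
    (fun _ _ _ => by
      simp only [Pi.smul_apply, Prod.smul_fst, Prod.smul_snd, smul_eq_mul, Finset.mul_sum]
      exact Finset.sum_congr rfl fun _ _ => by ring)
    (fun _ _ _ => by
      simp only [Pi.add_apply, Prod.fst_add, Prod.snd_add, ← Finset.sum_add_distrib]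
      exact Finset.sum_congr rfl fun _ _ => by ring)
    (fun _ _ _ => by
      simp only [Pi.smul_apply, Prod.smul_fst, Prod.smul_snd, smul_eq_mul, Finset.mul_sum]
      exact Finset.sum_congr rfl fun _ _ => by ring)

theorem dotProductForm_apply (x a : ι → R × R × R) :
    dotProductForm ι x a = ∑ i, ((a i).1 * (x i).1 + (a i).2.1 * (x i).2.1 + (a i).2.2 * (x i).2.2) :=
  rfl

theorem dotProductForm_single [DecidableEq ι] (x : ι → R × R × R) (i : ι) (v : R × R × R) :
    dotProductForm ι x (Pi.single i v) = v.1 * (x i).1 + v.2.1 * (x i).2.1 + v.2.2 * (x i).2.2 := by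
  rw [dotProductForm_apply, Fintype.sum_eq_single i fun j hj => by simp [hj]]
  simp

theorem separatingLeft_dotProductForm : (dotProductForm (R := R) ι).SeparatingLeft := by
  classical
  intro x hx
  funext i
  have h1 := hx (Pi.single i (1, 0, 0))
  have h2 := hx (Pi.single i (0, 1, 0))
  have h3 := hx (Pi.single i (0, 0, 1))
  simp only [dotProductForm_single] at h1 h2 h3
  ext <;> simp_all

end DotProductForm

theorem zds_structural_space_dim_general (R : ℕ) (Δt : ℝ) (hΔt : 0 < Δt) :
    ∃ W : Submodule ℝ (Fin (R + 1) → ℝ × ℝ × ℝ),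
      (∀ a : Fin (R + 1) → ℝ × ℝ × ℝ,
        a ∈ W ↔ ∀ φ : Polynomial ℝ, φ.natDegree ≤ 2 * R + 2 →
          ∑ r : Fin (R + 1),
            ((a r).1 * φ.eval ((r : ℕ) * Δt)
              + (a r).2.1 * φ.derivative.eval ((r : ℕ) * Δt)
              + (a r).2.2 * φ.derivative.derivative.eval ((r : ℕ) * Δt)) = 0) ∧
      Module.finrank ℝ W = R := by
  have ht : Function.Injective fun r : Fin (R + 1) => (r : ℕ) * Δt := fun i j h =>
    Fin.ext (by exact_mod_cast mul_right_cancel₀ hΔt.ne' h)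
  set E := secondJet (fun r : Fin (R + 1) => (r : ℕ) * Δt) ∘ₗ (degreeLE ℝ ↑(2 * R + 2)).subtype
  have hE : Function.Injective E := injective_secondJet_comp_subtype ht (by rw [Fintype.card_fin]; omega)
  refine ⟨(dotProductForm _).orthogonal (LinearMap.range E), fun a => ?_, ?_⟩
  · simp [LinearMap.BilinForm.mem_orthogonal_iff, E, mem_degreeLE, natDegree_le_iff_degree_le,
      dotProductForm_apply]
  · rw [LinearMap.BilinForm.finrank_orthogonal (.ofSeparatingLeft (separatingLeft_dotProductForm _)),
      LinearMap.finrank_range_of_inj hE, finrank_degreeLE]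
    simp only [Module.finrank_pi_fintype, Module.finrank_prod, Module.finrank_self,
      Finset.sum_const, Finset.card_univ, Fintype.card_fin, smul_eq_mul]
    omega

/-- For `R ≥ 1` and `Δt > 0`, with grid points `t_r = r·Δt`, the set of
coefficient vectors `a = (a_{r,0}, a_{r,1}, a_{r,2})_{r=0,…,R}` such that
`∑_r (a_{r,0} φ(t_r) + a_{r,1} φ'(t_r) + a_{r,2} φ''(t_r)) = 0` for every real polynomial
`φ` of degree `≤ 2R+2` is a linear subspace of `ℝ^{3(R+1)}` of dimension exactly `R`. -/
theorem zds_structural_space_dim (R : ℕ) (hR : 1 ≤ R) (Δt : ℝ) (hΔt : 0 < Δt) :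
    ∃ W : Submodule ℝ (Fin (R + 1) → ℝ × ℝ × ℝ),
      (∀ a : Fin (R + 1) → ℝ × ℝ × ℝ,
        a ∈ W ↔ ∀ φ : Polynomial ℝ, φ.natDegree ≤ 2 * R + 2 →
          ∑ r : Fin (R + 1),
            ((a r).1 * φ.eval ((r : ℕ) * Δt)
              + (a r).2.1 * φ.derivative.eval ((r : ℕ) * Δt)
              + (a r).2.2 * φ.derivative.derivative.eval ((r : ℕ) * Δt)) = 0) ∧
      Module.finrank ℝ W = R :=
  zds_structural_space_dim_general R Δt hΔt
end

section
/- Let m, g, ℓ > 0 and θ₀ ∈ (0, π). Let x, p : ℝ → ℝ be differentiable functions satisfying ẋ(t) = p(t)/(m ℓ²) and ṗ(t) = −m g ℓ sin(x(t)) for all t, with initial conditions x(0) = θ₀ and p(0) = 0. Then (x, p) is periodic with period T_p = 4 √(ℓ/g) ∫₀^{π/2} du / √(1 − ω² sin²(u)), where ω = sin(θ₀/2); that is, x(t + T_p) = x(t) and p(t + T_p) = p(t) for all t ∈ ℝ. -/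
/-!
Let `ω = sin (θ₀ / 2)` and `c = √(g / ℓ)`. If `φ' = c √(1 - ω² sin² φ)` and `φ 0 = π / 2`, then
`x = 2 arcsin (ω sin φ)`, `p = m ℓ² ẋ` solve Hamilton's equations with `x 0 = θ₀`, `p 0 = 0`.
Such a `φ` is the inverse of a primitive of `u ↦ 1 / (c √(1 - ω² sin² u))`; this integrand is
even and `π`-periodic, so `φ` gains exactly `2π` in time `4 ∫₀^{π/2} 1 / (c √(1 - ω² sin² u)) du`,
which is `T_p`. Since Hamilton's vector field is globally Lipschitz, this periodic pair is the
given solution.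
-/

open Real Filter Function

section InversePrimitive

variable {h : ℝ → ℝ} (a : ℝ)

theorem strictMono_primitive_of_pos (hh : Continuous h) (hpos : ∀ s, 0 < h s) :
    StrictMono fun y => ∫ s in a..y, h s :=
  strictMono_of_hasDerivAt_pos (fun y => (hh.integral_hasStrictDerivAt a y).hasDerivAt) hpos

theorem surjective_primitive_of_forall_le (hh : Continuous h) {ε : ℝ} (hε : 0 < ε)
    (hle : ∀ s, ε ≤ h s) : Surjective fun y => ∫ s in a..y, h s := by
  have hmono : Monotone fun y => (∫ s in a..y, h s) - ε * y :=
    monotone_of_hasDerivAt_nonneg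
      (fun y => (hh.integral_hasStrictDerivAt a y).hasDerivAt.sub ((hasDerivAt_id y).const_mul ε))
      (fun y => by simpa using hle y)
  have hcont : Continuous fun y => ∫ s in a..y, h s :=
    intervalIntegral.continuous_primitive (fun _ _ => hh.intervalIntegrable _ _) a
  set A₀ := ∫ s in a..0, h s
  refine hcont.surjective
    (tendsto_atTop_mono' _ ?_ (tendsto_atTop_add_const_left _ A₀ (tendsto_id.const_mul_atTop hε)))
    (tendsto_atBot_mono' _ ?_ (tendsto_atBot_add_const_left _ A₀ (tendsto_id.const_mul_atBot hε)))
  · filter_upwards [eventually_ge_atTop 0] with y hy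
    have := hmono hy
    dsimp only [id] at this ⊢
    linarith
  · filter_upwards [eventually_le_atBot 0] with y hy
    have := hmono hy
    dsimp only [id] at this ⊢
    linarith

theorem exists_rightInverse_primitive_hasDerivAt (hh : Continuous h) {ε : ℝ} (hε : 0 < ε)
    (hle : ∀ s, ε ≤ h s) :
    ∃ ψ : ℝ → ℝ, (∀ t, ∫ s in a..ψ t, h s = t) ∧ ∀ t, HasDerivAt ψ (h (ψ t))⁻¹ t := by
  have hpos : ∀ s, 0 < h s := fun s => hε.trans_le (hle s)
  let e := (strictMono_primitive_of_pos a hh hpos).orderIsoOfSurjective _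
    (surjective_primitive_of_forall_le a hh hε hle)
  exact ⟨e.symm, e.apply_symm_apply, fun t =>
    (hh.integral_hasStrictDerivAt a _).hasDerivAt.of_local_left_inverse
      e.symm.continuous.continuousAt (hpos _).ne' (Eventually.of_forall e.apply_symm_apply)⟩

theorem rightInverse_primitive_add_integral_period (hh : Continuous h) (hpos : ∀ s, 0 < h s)
    {P : ℝ} (hP : Periodic h P) {ψ : ℝ → ℝ} (hψ : ∀ t, ∫ s in a..ψ t, h s = t) (t : ℝ) :
    ψ (t + ∫ s in 0..P, h s) = ψ t + P := by
  apply (strictMono_primitive_of_pos a hh hpos).injective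
  simp only
  rw [hψ, ← intervalIntegral.integral_add_adjacent_intervals (hh.intervalIntegrable a (ψ t))
    (hh.intervalIntegrable _ _), hψ, hP.intervalIntegral_add_eq (ψ t) 0, zero_add]

end InversePrimitive

theorem Function.Periodic.intervalIntegral_eq_two_mul_of_even {h : ℝ → ℝ} {P : ℝ}
    (hP : Periodic h P) (heven : Function.Even h) (hh : Continuous h) :
    ∫ s in 0..P, h s = 2 * ∫ s in 0..P / 2, h s := by
  have hneg : ∫ s in -(P / 2)..0, h s = ∫ s in 0..P / 2, h s := by
    simpa [heven _] using (intervalIntegral.integral_comp_neg (a := 0) (b := P / 2) h).symm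
  have hshift := hP.intervalIntegral_add_eq 0 (-(P / 2))
  rw [zero_add, neg_add_eq_sub, sub_half] at hshift
  rw [hshift, ← intervalIntegral.integral_add_adjacent_intervals
    (hh.intervalIntegrable _ 0) (hh.intervalIntegrable 0 _), hneg]
  ring_nf

noncomputable def pendulumField (m g ℓ : ℝ) (z : ℝ × ℝ) : ℝ × ℝ :=
  (z.2 / (m * ℓ ^ 2), -(m * g * ℓ * sin z.1))

theorem exists_lipschitzWith_pendulumField (m g ℓ : ℝ) :
    ∃ K, LipschitzWith K (pendulumField m g ℓ) := by
  have hfst := (lipschitzWith_smul (m * ℓ ^ 2)⁻¹).comp (LipschitzWith.prod_snd (α := ℝ) (β := ℝ))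
  have hsnd := (lipschitzWith_smul (-(m * g * ℓ))).comp
    (lipschitzWith_sin.comp (LipschitzWith.prod_fst (α := ℝ) (β := ℝ)))
  have hv : pendulumField m g ℓ = fun z => ((m * ℓ ^ 2)⁻¹ • z.2, -(m * g * ℓ) • sin z.1) := by
    funext z
    simp [pendulumField, div_eq_inv_mul]
  exact ⟨_, hv ▸ hfst.prodMk hsnd⟩

theorem pendulumField_solution_unique {m g ℓ : ℝ} {F G : ℝ → ℝ × ℝ}
    (hF : ∀ t, HasDerivAt F (pendulumField m g ℓ (F t)) t)
    (hG : ∀ t, HasDerivAt G (pendulumField m g ℓ (G t)) t) (h0 : F 0 = G 0) : F = G := by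
  obtain ⟨K, hK⟩ := exists_lipschitzWith_pendulumField m g ℓ
  exact ODE_solution_unique_univ (v := fun _ => pendulumField m g ℓ) (s := fun _ => Set.univ)
    (fun _ => hK.lipschitzOnWith) (fun t => ⟨hF t, trivial⟩) (fun t => ⟨hG t, trivial⟩) h0

theorem sin_two_mul_arcsin {z : ℝ} (hz : |z| ≤ 1) : sin (2 * arcsin z) = 2 * z * √(1 - z ^ 2) := by
  rw [sin_two_mul, sin_arcsin (abs_le.1 hz).1 (abs_le.1 hz).2, cos_arcsin, mul_assoc]

theorem exists_pendulum_angle {c ω : ℝ} (hc : 0 < c) (hω : |ω| < 1) :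
    ∃ φ : ℝ → ℝ, φ 0 = π / 2 ∧ (∀ t, HasDerivAt φ (c * √(1 - ω ^ 2 * sin (φ t) ^ 2)) t) ∧
      ∀ t, φ (t + 4 * c⁻¹ * ∫ u in 0..π / 2, 1 / √(1 - ω ^ 2 * sin u ^ 2)) = φ t + 2 * π := by
  set f : ℝ → ℝ := fun u => √(1 - ω ^ 2 * sin u ^ 2)
  have hf_pos : ∀ u, 0 < f u := fun u => sqrt_pos.2 <| by
    nlinarith [sin_sq_le_one u, sq_abs ω, abs_nonneg ω, sq_nonneg (sin u)]
  have hf_le : ∀ u, f u ≤ 1 := fun u => sqrt_le_one.2 <| by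
    nlinarith [sq_nonneg ω, sq_nonneg (sin u)]
  set h : ℝ → ℝ := fun u => (c * f u)⁻¹
  have hh : Continuous h :=
    (continuous_const.mul (by fun_prop)).inv₀ fun u => (mul_pos hc (hf_pos u)).ne'
  have hh_pos : ∀ u, 0 < h u := fun u => inv_pos.2 (mul_pos hc (hf_pos u))
  have hh_le : ∀ u, c⁻¹ ≤ h u := fun u =>
    inv_anti₀ (mul_pos hc (hf_pos u)) (mul_le_of_le_one_right hc.le (hf_le u))
  have hh_per : Periodic h π := fun u => by simp [h, f, sin_add_pi]
  have hh_even : Function.Even h := fun u => by simp [h, f]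
  obtain ⟨ψ, hψ, hψ'⟩ := exists_rightInverse_primitive_hasDerivAt (π / 2) hh (inv_pos.2 hc) hh_le
  have hψ0 : ψ 0 = π / 2 :=
    (strictMono_primitive_of_pos (π / 2) hh hh_pos).injective <| by
      simp only [hψ, intervalIntegral.integral_same]
  have hperiod : 4 * c⁻¹ * ∫ u in 0..π / 2, 1 / f u = (∫ u in 0..π, h u) + ∫ u in 0..π, h u := by
    rw [hh_per.intervalIntegral_eq_two_mul_of_even hh_even hh]
    simp only [h, mul_inv, intervalIntegral.integral_const_mul, one_div]
    ring
  refine ⟨ψ, hψ0, fun t => by simpa [h] using hψ' t, fun t => ?_⟩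
  rw [hperiod, ← add_assoc, rightInverse_primitive_add_integral_period (π / 2) hh hh_pos hh_per hψ,
    rightInverse_primitive_add_integral_period (π / 2) hh hh_pos hh_per hψ]
  ring

theorem hasDerivAt_pendulumField_of_angle {m g ℓ c ω : ℝ} (hm : m ≠ 0) (hℓ : ℓ ≠ 0)
    (hc : c ^ 2 * ℓ = g) (hω : |ω| < 1) {φ : ℝ → ℝ}
    (hφ : ∀ t, HasDerivAt φ (c * √(1 - ω ^ 2 * sin (φ t) ^ 2)) t) (t : ℝ) :
    HasDerivAt (fun t => (2 * arcsin (ω * sin (φ t)), 2 * m * ℓ ^ 2 * ω * c * cos (φ t)))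
      (pendulumField m g ℓ (2 * arcsin (ω * sin (φ t)), 2 * m * ℓ ^ 2 * ω * c * cos (φ t))) t := by
  set z := ω * sin (φ t)
  have hz : |z| < 1 := by
    calc |z| = |ω| * |sin (φ t)| := abs_mul _ _
      _ ≤ |ω| := mul_le_of_le_one_right (abs_nonneg ω) (abs_sin_le_one _)
      _ < 1 := hω
  have hroot : √(1 - z ^ 2) = √(1 - ω ^ 2 * sin (φ t) ^ 2) := by rw [mul_pow]
  have hroot_pos : 0 < √(1 - z ^ 2) := sqrt_pos.2 <| by nlinarith [sq_abs z, abs_nonneg z]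
  have hx := ((hasDerivAt_arcsin (abs_lt.1 hz).1.ne' (abs_lt.1 hz).2.ne).comp t
    ((hφ t).sin.const_mul ω)).const_mul 2
  have hp := ((hφ t).cos.const_mul (2 * m * ℓ ^ 2 * ω * c))
  refine (hx.prodMk hp).congr_deriv ?_
  simp only [pendulumField, sin_two_mul_arcsin hz.le, Prod.mk.injEq]
  rw [← hroot]
  constructor
  · field_simp
  · rw [← hc]
    ring

/-- The pendulum system `ẋ = p/(mℓ²)`, `ṗ = −mgℓ sin x`, with initial
conditions `x(0) = θ₀ ∈ (0, π)` and `p(0) = 0`, is periodic with period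
`T_p = 4√(ℓ/g) ∫₀^{π/2} du/√(1 − ω² sin²u)`, where `ω = sin(θ₀/2)`. -/
theorem pendulum_periodic
    (m g ℓ : ℝ) (hm : 0 < m) (hg : 0 < g) (hℓ : 0 < ℓ)
    (θ₀ : ℝ) (hθ₀ : θ₀ ∈ Set.Ioo 0 π)
    (x p : ℝ → ℝ) (hx : Differentiable ℝ x) (hp : Differentiable ℝ p)
    (hxeq : ∀ t : ℝ, deriv x t = p t / (m * ℓ ^ 2))
    (hpeq : ∀ t : ℝ, deriv p t = -(m * g * ℓ * sin (x t)))
    (hx0 : x 0 = θ₀) (hp0 : p 0 = 0)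
    (Tp : ℝ)
    (hTp : Tp = 4 * Real.sqrt (ℓ / g)
      * ∫ u in (0 : ℝ)..(π / 2), 1 / Real.sqrt (1 - sin (θ₀ / 2) ^ 2 * sin u ^ 2)) :
    ∀ t : ℝ, x (t + Tp) = x t ∧ p (t + Tp) = p t := by
  obtain ⟨hθ0, hθπ⟩ := hθ₀
  set ω := sin (θ₀ / 2)
  have hω : |ω| < 1 := by
    have : 0 < cos (θ₀ / 2) := cos_pos_of_mem_Ioo ⟨by linarith, by linarith⟩
    exact (sq_lt_one_iff_abs_lt_one _).1 (by nlinarith [sin_sq_add_cos_sq (θ₀ / 2)])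
  set c := √(g / ℓ)
  have hc : c ^ 2 * ℓ = g := by rw [sq_sqrt (div_pos hg hℓ).le, div_mul_cancel₀ _ hℓ.ne']
  have hT : Tp = 4 * c⁻¹ * ∫ u in 0..π / 2, 1 / √(1 - ω ^ 2 * sin u ^ 2) := by
    rw [hTp, ← sqrt_inv, inv_div]
  have harcsin : 2 * arcsin ω = θ₀ := by
    rw [arcsin_sin (by linarith) (by linarith)]
    ring
  obtain ⟨φ, hφ0, hφ, hφT⟩ := exists_pendulum_angle (c := c) (sqrt_pos.2 (div_pos hg hℓ)) hω
  set X : ℝ → ℝ × ℝ := fun t => (2 * arcsin (ω * sin (φ t)), 2 * m * ℓ ^ 2 * ω * c * cos (φ t))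
  have hxp : (fun t => (x t, p t)) = X := by
    refine pendulumField_solution_unique (fun t => ?_)
      (hasDerivAt_pendulumField_of_angle hm.ne' hℓ.ne' hc hω hφ) ?_
    · exact (hxeq t ▸ (hx t).hasDerivAt).prodMk (hpeq t ▸ (hp t).hasDerivAt)
    · simp [X, hφ0, hx0, hp0, harcsin]
  have hXT : ∀ t, X (t + Tp) = X t := fun t => by
    simp only [X, hT, hφT, sin_add_two_pi, cos_add_two_pi]
  intro t
  exact Prod.ext_iff.1 ((congrFun hxp _).trans ((hXT t).trans (congrFun hxp t).symm))
end
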